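/- arXiv:1302.5401 — 3 statements merged into one kernel-verified Lean document; each statement's English description precedes it below -/
import Mathlib

section
/- Let ⟨U,𝒮⟩ be a Set-Cover instance with universe U = {u_1,…,u_N} and sets 𝒮 = {S_1,…,S_M} covering U (N, M ≥ 1), and let G = G(U,𝒮) be the reduction graph with source s. Then every spanning subgraph H of G that is an edge FT-BFS structure for G with respect to s contains every edge of Ẽ = E(G) ∖ E_XY. -/
open SimpleGraph

/-- `H` is an edge FT-BFS structure for `G` with respect to source `s`. -/
def IsFTBFS {V : Type*} (G H : SimpleGraph V) (s : V) : Prop :=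
  H ≤ G ∧ ∀ e ∈ G.edgeSet, ∀ v : V,
    ((H.deleteEdges {e}).Reachable s v ↔ (G.deleteEdges {e}).Reachable s v) ∧
    ((G.deleteEdges {e}).Reachable s v →
      (H.deleteEdges {e}).dist s v = (G.deleteEdges {e}).dist s v)

/-- The vertex set of the reduction graph `G(U,𝒮)` for a Set-Cover instance with
`M` sets, `N` elements and `R` extra vertices `Y`:
`x j` are the set-vertices, `z i` the element-vertices, `p k` (for `0 ≤ k ≤ N+1`)
the vertices of the path `P`, `v'` the extra vertex, `y l` the vertices of `Y`, and
`q i k` (for `0 ≤ k ≤ 4 + 2(N−1−i)`) the internal vertices of the path `Q_i` of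
length `6 + 2(N−1−i)` from `p i` to `z i` (indices `i` are 0-based, so `z i`
corresponds to the element `u_{i+1}` and `p i` to `p_{(i+1)−1}`). -/
inductive RV (M N R : ℕ) : Type where
  | x : Fin M → RV M N R
  | z : Fin N → RV M N R
  | p : Fin (N + 2) → RV M N R
  | v' : RV M N R
  | y : Fin R → RV M N R
  | q : (i : Fin N) → Fin (5 + 2 * (N - 1 - i.val)) → RV M N R

/-- The (one-directional) adjacency relation of the reduction graph.  `mem j i`
states that the element `u_{i+1}` belongs to the set `S_{j+1}`.  The clauses give,
in order: the edges `E_XZ`; the path `P`; the first edge of each `Q_i`; the internal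
edges of each `Q_i`; the last edge of each `Q_i`; the edge `(p_N, v')`; the edges
`E_pY`; the edges `E_pX`; the edges `E_vX`; and the edges `E_XY`. -/
def rRel (M N R : ℕ) (mem : Fin M → Fin N → Prop) :
    RV M N R → RV M N R → Prop
  | .x j, .z i => mem j i
  | .p k, .p k' => k.val + 1 = k'.val
  | .p k, .q i k' => k.val = i.val ∧ k'.val = 0
  | .q i k, .q i' k' => i.val = i'.val ∧ k.val + 1 = k'.val
  | .q i k, .z i' => i.val = i'.val ∧ k.val = 4 + 2 * (N - 1 - i.val)
  | .p k, .v' => k.val = N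
  | .p k, .y _ => k.val = N + 1
  | .p k, .x _ => k.val = N + 1
  | .v', .x _ => True
  | .x _, .y _ => True
  | _, _ => False

/-- The reduction graph `G(U,𝒮)`. -/
def RGraph (M N R : ℕ) (mem : Fin M → Fin N → Prop) : SimpleGraph (RV M N R) :=
  SimpleGraph.fromRel (rRel M N R mem)

/-- The edge set `E_XY` of the complete bipartite graph between `X` and `Y`. -/
def EXY (M N R : ℕ) : Set (Sym2 (RV M N R)) :=
  {e | ∃ (j : Fin M) (l : Fin R), e = s(RV.x j, RV.y l)}

lemma lipschitz_walk {V : Type*} {K : SimpleGraph V} (ψ : V → ℕ)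
    (h : ∀ u v, K.Adj u v → ψ v ≤ ψ u + 1) :
    ∀ {u v : V} (w : K.Walk u v), ψ v ≤ ψ u + w.length := by
  intro u v w
  induction w with
  | nil => simp
  | cons h' p ih =>
      rename_i a b c
      have := h a b h'
      simp only [SimpleGraph.Walk.length_cons]
      omega

lemma exists_walk_chain {V : Type*} (K : SimpleGraph V) (g : ℕ → V) :
    ∀ k : ℕ, (∀ m, m < k → K.Adj (g m) (g (m + 1))) →
      ∃ w : K.Walk (g 0) (g k), w.length = k := by
  intro k
  induction k with
  | zero => exact fun _ => ⟨.nil, rfl⟩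
  | succ n ih =>
      intro h
      obtain ⟨w, hw⟩ := ih (fun m hm => h m (by omega))
      exact ⟨w.concat (h n (by omega)), by simp [SimpleGraph.Walk.length_concat, hw]⟩

lemma forced_edge {V : Type*} {G H : SimpleGraph V} {s : V} (hFT : IsFTBFS G H s)
    {f : Sym2 V} (hf : f ∈ G.edgeSet) (a b : V)
    (w : (G.deleteEdges {f}).Walk s b) (d : ℕ) (hw : w.length = d) (hd0 : 0 < d)
    (ψ : V → ℕ) (hψs : ψ s = 0) (hψb : ψ b = d)
    (hψ : ∀ u v, (G.deleteEdges {f}).Adj u v → ψ v ≤ ψ u + 1)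
    (hpar : ∀ c, (G.deleteEdges {f}).Adj c b → s(c, b) ≠ s(a, b) → d ≤ ψ c) :
    s(a, b) ∈ H.edgeSet := by
  by_contra he
  have hsb : s ≠ b := by rintro rfl; omega
  have hr : (G.deleteEdges {f}).Reachable s b := w.reachable
  obtain ⟨hreach, hdist⟩ := hFT.2 f hf b
  have hGd : (G.deleteEdges {f}).dist s b = d := by
    have h1 : (G.deleteEdges {f}).dist s b ≤ d := hw ▸ SimpleGraph.dist_le w
    obtain ⟨w', hw'⟩ := hr.exists_walk_length_eq_dist
    have h2 := lipschitz_walk ψ hψ w'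
    omega
  have hrH : (H.deleteEdges {f}).Reachable s b := hreach.mpr hr
  have hdH : (H.deleteEdges {f}).dist s b = d := (hdist hr).trans hGd
  obtain ⟨wH, hwH⟩ := hrH.exists_walk_length_eq_dist
  rw [hdH] at hwH
  -- the override potential
  classical
  set φ : V → ℕ := fun v => if v = b then d + 1 else min (d + 1) (ψ v) with hφdef
  have hφL : ∀ u v, (H.deleteEdges {f}).Adj u v → φ v ≤ φ u + 1 := by
    intro u v huv
    have hGadj : (G.deleteEdges {f}).Adj u v := by
      rw [SimpleGraph.deleteEdges_adj] at huv ⊢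
      exact ⟨hFT.1 huv.1, huv.2⟩
    have hneuv : s(u, v) ≠ s(a, b) := by
      intro hEq
      exact he (hEq ▸ ((H.mem_edgeSet).2 ((SimpleGraph.deleteEdges_adj).1 huv).1))
    by_cases hvb : v = b
    · subst hvb
      have hub : u ≠ v := fun h => (h ▸ huv).ne rfl
      have := hpar u hGadj hneuv
      simp only [hφdef, if_pos rfl, if_neg hub]
      omega
    · by_cases hub : u = b
      · subst hub
        simp only [hφdef, if_pos rfl, if_neg hvb]
        omega
      · have := hψ u v hGadj
        simp only [hφdef, if_neg hvb, if_neg hub]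
        omega
  have hlen := lipschitz_walk φ hφL wH
  have hφs : φ s = 0 := by simp [hφdef, if_neg hsb, hψs]
  have hφb : φ b = d + 1 := by simp [hφdef]
  omega


/-- BFS levels in `G`. -/
def pot0 (M N R : ℕ) : RV M N R → ℕ
  | .p k => k.val
  | .v' => N + 1
  | .x _ => N + 2
  | .y _ => N + 2
  | .z _ => N + 3
  | .q i t => min (i.val + 1 + t.val) (3 * N + 6 - 2 * i.val - t.val)

lemma pot0_rel (M N R : ℕ) (mem : Fin M → Fin N → Prop) :
    ∀ u v : RV M N R, rRel M N R mem u v →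
      pot0 M N R u ≤ pot0 M N R v + 1 ∧ pot0 M N R v ≤ pot0 M N R u + 1 := by
  intro u v h
  cases u <;> cases v <;> simp only [rRel] at h <;> simp only [pot0]
  case x.z j i => omega
  case x.y j l => omega
  case p.x k j => omega
  case p.p k k' => omega
  case p.v' k => omega
  case p.y k l => omega
  case p.q k i t => have := i.isLt; have := t.isLt; omega
  case v'.x j => omega
  case q.z i t i' => have := i.isLt; have := t.isLt; omega
  case q.q i t i' t' => have := i.isLt; have := t.isLt; have := t'.isLt; omega

/-- failure edge `(p_i, p_{i+1})`. -/
def fpQ (M N R : ℕ) (i : Fin N) : Sym2 (RV M N R) :=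
  s(RV.p ⟨i.val, by have := i.isLt; omega⟩, RV.p ⟨i.val + 1, by have := i.isLt; omega⟩)

/-- failure edge `(p_N, v')`. -/
def fpv (M N R : ℕ) : Sym2 (RV M N R) := s(RV.p ⟨N, by omega⟩, RV.v')

/-- failure edge `(p_N, p_{N+1})`. -/
def fpp (M N R : ℕ) : Sym2 (RV M N R) :=
  s(RV.p ⟨N, by omega⟩, RV.p ⟨N + 1, by omega⟩)

/-- dummy failure edge `(x_0, y_0)`. -/
def fxy (M N R : ℕ) (hM : 0 < M) (hR : 0 < R) : Sym2 (RV M N R) :=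
  s(RV.x ⟨0, hM⟩, RV.y ⟨0, hR⟩)

/-- BFS levels in `G ∖ (p_N, v')`. -/
def pot1 (M N R : ℕ) : RV M N R → ℕ
  | .p k => k.val
  | .v' => N + 3
  | .x _ => N + 2
  | .y _ => N + 2
  | .z _ => N + 3
  | .q i t => min (i.val + 1 + t.val) (3 * N + 6 - 2 * i.val - t.val)

lemma pot1_rel (M N R : ℕ) (mem : Fin M → Fin N → Prop) :
    ∀ u v : RV M N R, rRel M N R mem u v → s(u, v) ≠ fpv M N R →
      pot1 M N R u ≤ pot1 M N R v + 1 ∧ pot1 M N R v ≤ pot1 M N R u + 1 := by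
  intro u v h hne
  cases u <;> cases v <;> simp only [rRel] at h <;> simp only [pot1]
  case x.z j i => omega
  case x.y j l => omega
  case p.x k j => omega
  case p.p k k' => omega
  case p.v' k =>
      exact absurd (by rw [fpv, show k = ⟨N, by omega⟩ from Fin.ext h]) hne
  case p.y k l => omega
  case p.q k i t => have := i.isLt; have := t.isLt; omega
  case v'.x j => omega
  case q.z i t i' => have := i.isLt; have := t.isLt; omega
  case q.q i t i' t' => have := i.isLt; have := t.isLt; have := t'.isLt; omega

/-- BFS levels in `G ∖ (p_N, p_{N+1})`. -/
def pot2 (M N R : ℕ) : RV M N R → ℕ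
  | .p k => if k.val = N + 1 then N + 3 else k.val
  | .v' => N + 1
  | .x _ => N + 2
  | .y _ => N + 3
  | .z _ => N + 3
  | .q i t => min (i.val + 1 + t.val) (3 * N + 6 - 2 * i.val - t.val)

lemma pot2_rel (M N R : ℕ) (mem : Fin M → Fin N → Prop) :
    ∀ u v : RV M N R, rRel M N R mem u v → s(u, v) ≠ fpp M N R →
      pot2 M N R u ≤ pot2 M N R v + 1 ∧ pot2 M N R v ≤ pot2 M N R u + 1 := by
  intro u v h hne
  cases u <;> cases v <;> simp only [rRel] at h <;> simp only [pot2]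
  case x.z j i => omega
  case x.y j l => omega
  case p.x k j => split_ifs <;> omega
  case p.p k k' =>
      have hk : k.val ≠ N := by
        intro hk
        apply hne
        rw [fpp, show k = ⟨N, by omega⟩ from Fin.ext hk,
          show k' = ⟨N + 1, by omega⟩ from Fin.ext (show k'.val = N + 1 by omega)]
      split_ifs <;> omega
  case p.v' k => have := k.isLt; split_ifs <;> omega
  case p.y k l => split_ifs <;> omega
  case p.q k i t => have := i.isLt; have := t.isLt; have := k.isLt; split_ifs <;> omega
  case v'.x j => omega
  case q.z i t i' => have := i.isLt; have := t.isLt; omega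
  case q.q i t i' t' => have := i.isLt; have := t.isLt; have := t'.isLt; omega

open scoped Classical in
/-- BFS levels in `G ∖ (p_i, p_{i+1})`. -/
noncomputable def potQ (M N R : ℕ) (mem : Fin M → Fin N → Prop) (i : Fin N) :
    RV M N R → ℕ
  | .p m => if m.val ≤ i.val then m.val
      else if m.val = N + 1 then 2 * N - i.val + 6 else 3 * N + 7 - i.val - m.val
  | .v' => 2 * N - i.val + 6
  | .y _ => 2 * N - i.val + 6
  | .x j => if mem j i then 2 * N - i.val + 5 else 2 * N - i.val + 6
  | .z i' => if i'.val ≤ i.val then min (2 * N - i'.val + 4) (2 * N - i.val + 6)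
      else 2 * N - i.val + 6
  | .q i' t => if i'.val ≤ i.val
      then min (i'.val + 1 + t.val)
        (min (2 * N - i'.val + 4) (2 * N - i.val + 6) + (2 * N - 2 * i'.val + 3 - t.val))
      else min (3 * N + 8 - i.val - i'.val + t.val) (4 * N + 9 - 2 * i'.val - i.val - t.val)

lemma potQ_rel (M N R : ℕ) (mem : Fin M → Fin N → Prop) (i : Fin N) :
    ∀ u v : RV M N R, rRel M N R mem u v → s(u, v) ≠ fpQ M N R i →
      potQ M N R mem i u ≤ potQ M N R mem i v + 1 ∧
        potQ M N R mem i v ≤ potQ M N R mem i u + 1 := by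
  have hi := i.isLt
  intro u v h hne
  cases u <;> cases v <;> simp only [rRel] at h <;> simp only [potQ]
  case x.z j i'' =>
      rcases eq_or_ne i'' i with rfl | hne'
      · rw [if_pos h, if_pos (le_refl i''.val)]; omega
      · have hv : i''.val ≠ i.val := fun hh => hne' (Fin.ext hh)
        split_ifs <;> omega
  case x.y j l => split_ifs <;> omega
  case p.x k j => split_ifs <;> omega
  case p.p k k' =>
      have hk : k.val ≠ i.val := by
        intro hk
        obtain rfl : k = ⟨i.val, Nat.lt_succ_of_lt (Nat.lt_succ_of_lt hi)⟩ := Fin.ext hk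
        obtain rfl : k' = ⟨i.val + 1, Nat.succ_lt_succ (Nat.lt_succ_of_lt hi)⟩ :=
          Fin.ext (show k'.val = i.val + 1 by omega)
        exact hne (by rw [fpQ])
      have := k.isLt; have := k'.isLt
      split_ifs <;> omega
  case p.v' k => split_ifs <;> omega
  case p.y k l => split_ifs <;> omega
  case p.q k i' t => have := i'.isLt; have := t.isLt; have := k.isLt; split_ifs <;> omega
  case v'.x j => split_ifs <;> omega
  case q.z i' t i'' => have := i'.isLt; have := t.isLt; split_ifs <;> omega
  case q.q i1 t1 i2 t2 =>
      have := i1.isLt; have := t1.isLt; have := t2.isLt; split_ifs <;> omega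

lemma lift_lip (M N R : ℕ) (mem : Fin M → Fin N → Prop) (ψ : RV M N R → ℕ)
    (f : Sym2 (RV M N R))
    (hrel : ∀ u v, rRel M N R mem u v → s(u, v) ≠ f →
      ψ u ≤ ψ v + 1 ∧ ψ v ≤ ψ u + 1) :
    ∀ u v, ((RGraph M N R mem).deleteEdges {f}).Adj u v → ψ v ≤ ψ u + 1 := by
  intro u v h
  rw [SimpleGraph.deleteEdges_adj] at h
  obtain ⟨hadj, hf⟩ := h
  have hne : s(u, v) ≠ f := by simpa using hf
  rw [RGraph, SimpleGraph.fromRel_adj] at hadj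
  rcases hadj.2 with h | h
  · exact (hrel u v h hne).2
  · exact (hrel v u h (by rwa [Sym2.eq_swap])).1

/-- vertices of the path `P`, clamped. -/
def gp (M N R : ℕ) (m : ℕ) : RV M N R :=
  RV.p ⟨min m (N + 1), Nat.lt_succ_of_le (min_le_right _ _)⟩

lemma walk_to_p (M N R : ℕ) (mem : Fin M → Fin N → Prop) (f : Sym2 (RV M N R))
    (k : ℕ) (hk : k ≤ N + 1)
    (hf : ∀ m : ℕ, m < k → s(gp M N R m, gp M N R (m + 1)) ≠ f) :
    ∃ w : ((RGraph M N R mem).deleteEdges {f}).Walk (gp M N R 0) (gp M N R k),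
      w.length = k := by
  apply exists_walk_chain
  intro m hm
  rw [SimpleGraph.deleteEdges_adj]
  refine ⟨?_, by simpa using hf m hm⟩
  rw [RGraph, SimpleGraph.fromRel_adj]
  refine ⟨?_, Or.inl ?_⟩
  · simp only [gp, ne_eq, RV.p.injEq, Fin.mk.injEq]
    omega
  · show min m (N + 1) + 1 = min (m + 1) (N + 1)
    omega

/-- vertices of the path `P ∪ Q_i`, clamped. -/
def gq (M N R : ℕ) (i : Fin N) (m : ℕ) : RV M N R :=
  if m ≤ i.val then RV.p ⟨min m (N + 1), Nat.lt_succ_of_le (min_le_right _ _)⟩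
  else RV.q i ⟨min (m - (i.val + 1)) (4 + 2 * (N - 1 - i.val)), by omega⟩

lemma walk_to_q (M N R : ℕ) (mem : Fin M → Fin N → Prop) (i : Fin N) (t : ℕ)
    (ht : t ≤ 4 + 2 * (N - 1 - i.val)) :
    ∃ w : ((RGraph M N R mem).deleteEdges {fpQ M N R i}).Walk (gq M N R i 0)
      (gq M N R i (i.val + 1 + t)), w.length = i.val + 1 + t := by
  have hi := i.isLt
  apply exists_walk_chain
  intro m hm
  rw [SimpleGraph.deleteEdges_adj]
  constructor
  · rw [RGraph, SimpleGraph.fromRel_adj]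
    refine ⟨?_, Or.inl ?_⟩
    · simp only [gq, ne_eq]
      split_ifs <;> simp only [RV.p.injEq, RV.q.injEq, Fin.mk.injEq, reduceCtorEq,
        not_false_eq_true, heq_eq_eq, true_and] <;> omega
    · simp only [gq]
      split_ifs with h1 h2
      · show min m (N + 1) + 1 = min (m + 1) (N + 1)
        omega
      · show min m (N + 1) = i.val ∧
          min (m + 1 - (i.val + 1)) (4 + 2 * (N - 1 - i.val)) = 0
        constructor <;> omega
      · exact absurd ‹m + 1 ≤ i.val› (by omega)
      · show i.val = i.val ∧ min (m - (i.val + 1)) (4 + 2 * (N - 1 - i.val)) + 1 =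
          min (m + 1 - (i.val + 1)) (4 + 2 * (N - 1 - i.val))
        exact ⟨rfl, by omega⟩
  · simp only [Set.mem_singleton_iff, gq, fpQ]
    split_ifs <;> simp only [Sym2.eq_iff, RV.p.injEq, RV.q.injEq, Fin.mk.injEq,
      reduceCtorEq, false_and, and_false, or_self, not_false_eq_true, or_false,
      false_or, not_or, not_and] <;> omega

lemma radj (M N R : ℕ) (mem : Fin M → Fin N → Prop) (f : Sym2 (RV M N R))
    (u v : RV M N R) (hne : u ≠ v) (h : rRel M N R mem u v) (hf : s(u, v) ≠ f) :
    ((RGraph M N R mem).deleteEdges {f}).Adj u v := by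
  rw [SimpleGraph.deleteEdges_adj, RGraph, SimpleGraph.fromRel_adj]
  exact ⟨⟨hne, Or.inl h⟩, by simpa using hf⟩

lemma redge (M N R : ℕ) (mem : Fin M → Fin N → Prop)
    (u v : RV M N R) (hne : u ≠ v) (h : rRel M N R mem u v) :
    s(u, v) ∈ (RGraph M N R mem).edgeSet := by
  rw [SimpleGraph.mem_edgeSet, RGraph, SimpleGraph.fromRel_adj]
  exact ⟨hne, Or.inl h⟩

lemma fpQ_mem (M N R : ℕ) (mem : Fin M → Fin N → Prop) (i : Fin N) :
    fpQ M N R i ∈ (RGraph M N R mem).edgeSet := by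
  apply redge
  · simp only [ne_eq, RV.p.injEq, Fin.mk.injEq]; omega
  · show i.val + 1 = i.val + 1; rfl

lemma fpv_mem (M N R : ℕ) (mem : Fin M → Fin N → Prop) :
    fpv M N R ∈ (RGraph M N R mem).edgeSet := by
  apply redge
  · simp
  · show N = N; rfl

lemma fpp_mem (M N R : ℕ) (mem : Fin M → Fin N → Prop) :
    fpp M N R ∈ (RGraph M N R mem).edgeSet := by
  apply redge
  · simp only [ne_eq, RV.p.injEq, Fin.mk.injEq]; omega
  · show N + 1 = N + 1; rfl

lemma fxy_mem (M N R : ℕ) (mem : Fin M → Fin N → Prop) (hM : 0 < M) (hR : 0 < R) :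
    fxy M N R hM hR ∈ (RGraph M N R mem).edgeSet := by
  apply redge
  · simp
  · trivial

lemma gp_zero (M N R : ℕ) : gp M N R 0 = RV.p 0 := by
  exact congrArg RV.p (Fin.ext (by simp))

lemma gp_eq (M N R : ℕ) (k : Fin (N + 2)) : gp M N R k.val = RV.p k := by
  unfold gp; congr 1; apply Fin.ext
  show min k.val (N + 1) = k.val
  have := k.isLt; omega

lemma gq_zero (M N R : ℕ) (i : Fin N) : gq M N R i 0 = RV.p 0 := by
  unfold gq; rw [if_pos (Nat.zero_le _)]
  exact congrArg RV.p (Fin.ext (by simp))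

lemma gq_eq (M N R : ℕ) (i : Fin N) (t : Fin (5 + 2 * (N - 1 - i.val))) :
    gq M N R i (i.val + 1 + t.val) = RV.q i t := by
  unfold gq; rw [if_neg (by omega)]; congr 1; apply Fin.ext
  show min (i.val + 1 + t.val - (i.val + 1)) (4 + 2 * (N - 1 - i.val)) = t.val
  have := t.isLt; omega

open SimpleGraph.Walk in
lemma main_rel (M N R : ℕ) (hM : 0 < M) (hN : 0 < N) (hR : 0 < R)
    (mem : Fin M → Fin N → Prop) (H : SimpleGraph (RV M N R))
    (hFT : IsFTBFS (RGraph M N R mem) H (RV.p 0))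
    (u v : RV M N R) (hneuv : u ≠ v) (h : rRel M N R mem u v)
    (hxy : s(u, v) ∉ EXY M N R) : s(u, v) ∈ H.edgeSet := by
  have hlip0 := lift_lip M N R mem (pot0 M N R) (fxy M N R hM hR)
    (fun u v hr _ => pot0_rel M N R mem u v hr)
  cases u <;> cases v <;> simp only [rRel] at h
  case x.y j l => exact absurd ⟨j, l, rfl⟩ hxy
  case p.p k k' =>
    obtain ⟨w0, hw0⟩ := walk_to_p M N R mem (fxy M N R hM hR) k'.val
      (by have := k'.isLt; omega)
      (by intro m hm
          simp only [gp, fxy, ne_eq, Sym2.eq_iff, reduceCtorEq, false_and, and_false,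
            or_self, not_false_eq_true])
    refine forced_edge hFT (fxy_mem M N R mem hM hR) (RV.p k) (RV.p k')
      (w0.copy (gp_zero M N R) (gp_eq M N R k')) k'.val
      (by simpa using hw0) (by omega) (pot0 M N R) (by simp [pot0]) rfl hlip0 ?_
    intro c hc hnec
    rw [SimpleGraph.deleteEdges_adj, RGraph, SimpleGraph.fromRel_adj] at hc
    obtain ⟨⟨-, hrel⟩, -⟩ := hc
    cases c
    case p m =>
      rcases hrel with h2 | h2 <;> simp only [rRel] at h2
      · exfalso; apply hnec
        obtain rfl : m = k := Fin.ext (by omega)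
        rfl
      · simp only [pot0]; omega
    case v' =>
      rcases hrel with h2 | h2 <;> simp only [rRel] at h2
      simp only [pot0]; omega
    case x j2 =>
      rcases hrel with h2 | h2 <;> simp only [rRel] at h2
      simp only [pot0]; omega
    case y l2 =>
      rcases hrel with h2 | h2 <;> simp only [rRel] at h2
      simp only [pot0]; omega
    case z i2 =>
      rcases hrel with h2 | h2 <;> simp only [rRel] at h2
    case q i2 t2 =>
      rcases hrel with h2 | h2 <;> simp only [rRel] at h2
      have := i2.isLt; have := t2.isLt
      simp only [pot0]; omega
  case p.v' k =>
    obtain ⟨w0, hw0⟩ := walk_to_p M N R mem (fxy M N R hM hR) N (by omega)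
      (by intro m hm
          simp only [gp, fxy, ne_eq, Sym2.eq_iff, reduceCtorEq, false_and, and_false,
            or_self, not_false_eq_true])
    have hadj : ((RGraph M N R mem).deleteEdges {fxy M N R hM hR}).Adj
        (gp M N R N) RV.v' := by
      apply radj
      · simp [gp]
      · show min N (N + 1) = N; omega
      · simp [gp, fxy, Sym2.eq_iff]
    refine forced_edge hFT (fxy_mem M N R mem hM hR) (RV.p k) RV.v'
      ((w0.copy (gp_zero M N R) rfl).concat hadj) (N + 1)
      (by simp [hw0]) (by omega) (pot0 M N R) (by simp [pot0]) rfl hlip0 ?_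
    intro c hc hnec
    rw [SimpleGraph.deleteEdges_adj, RGraph, SimpleGraph.fromRel_adj] at hc
    obtain ⟨⟨-, hrel⟩, -⟩ := hc
    cases c
    case p m =>
      rcases hrel with h2 | h2 <;> simp only [rRel] at h2
      exfalso; apply hnec
      obtain rfl : m = k := Fin.ext (by omega)
      rfl
    case v' =>
      rcases hrel with h2 | h2 <;> simp only [rRel] at h2
    case x j2 =>
      rcases hrel with h2 | h2 <;> simp only [rRel] at h2
      simp only [pot0]; omega
    case y l2 =>
      rcases hrel with h2 | h2 <;> simp only [rRel] at h2
    case z i2 =>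
      rcases hrel with h2 | h2 <;> simp only [rRel] at h2
    case q i2 t2 =>
      rcases hrel with h2 | h2 <;> simp only [rRel] at h2
  case p.y k l =>
    obtain ⟨w0, hw0⟩ := walk_to_p M N R mem (fxy M N R hM hR) (N + 1) le_rfl
      (by intro m hm
          simp only [gp, fxy, ne_eq, Sym2.eq_iff, reduceCtorEq, false_and, and_false,
            or_self, not_false_eq_true])
    have hadj : ((RGraph M N R mem).deleteEdges {fxy M N R hM hR}).Adj
        (gp M N R (N + 1)) (RV.y l) := by
      apply radj
      · simp [gp]
      · show min (N + 1) (N + 1) = N + 1; omega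
      · simp [gp, fxy, Sym2.eq_iff]
    refine forced_edge hFT (fxy_mem M N R mem hM hR) (RV.p k) (RV.y l)
      ((w0.copy (gp_zero M N R) rfl).concat hadj) (N + 2)
      (by simp [hw0]) (by omega) (pot0 M N R) (by simp [pot0]) rfl hlip0 ?_
    intro c hc hnec
    rw [SimpleGraph.deleteEdges_adj, RGraph, SimpleGraph.fromRel_adj] at hc
    obtain ⟨⟨-, hrel⟩, -⟩ := hc
    cases c
    case p m =>
      rcases hrel with h2 | h2 <;> simp only [rRel] at h2
      exfalso; apply hnec
      obtain rfl : m = k := Fin.ext (by omega)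
      rfl
    case v' =>
      rcases hrel with h2 | h2 <;> simp only [rRel] at h2
    case x j2 =>
      rcases hrel with h2 | h2 <;> simp only [rRel] at h2
      simp only [pot0]; omega
    case y l2 =>
      rcases hrel with h2 | h2 <;> simp only [rRel] at h2
    case z i2 =>
      rcases hrel with h2 | h2 <;> simp only [rRel] at h2
    case q i2 t2 =>
      rcases hrel with h2 | h2 <;> simp only [rRel] at h2
  case p.x k j =>
    obtain ⟨w0, hw0⟩ := walk_to_p M N R mem (fpv M N R) (N + 1) le_rfl
      (by intro m hm
          simp only [gp, fpv, ne_eq, Sym2.eq_iff, reduceCtorEq, false_and, and_false,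
            or_self, not_false_eq_true])
    have hadj : ((RGraph M N R mem).deleteEdges {fpv M N R}).Adj
        (gp M N R (N + 1)) (RV.x j) := by
      apply radj
      · simp [gp]
      · show min (N + 1) (N + 1) = N + 1; omega
      · simp [gp, fpv, Sym2.eq_iff]
    refine forced_edge hFT (fpv_mem M N R mem) (RV.p k) (RV.x j)
      ((w0.copy (gp_zero M N R) rfl).concat hadj) (N + 2)
      (by simp [hw0]) (by omega) (pot1 M N R) (by simp [pot1]) rfl
      (lift_lip M N R mem (pot1 M N R) (fpv M N R) (pot1_rel M N R mem)) ?_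
    intro c hc hnec
    rw [SimpleGraph.deleteEdges_adj, RGraph, SimpleGraph.fromRel_adj] at hc
    obtain ⟨⟨-, hrel⟩, -⟩ := hc
    cases c
    case p m =>
      rcases hrel with h2 | h2 <;> simp only [rRel] at h2
      exfalso; apply hnec
      obtain rfl : m = k := Fin.ext (by omega)
      rfl
    case v' =>
      rcases hrel with h2 | h2 <;> simp only [rRel] at h2
      simp only [pot1]; omega
    case x j2 =>
      rcases hrel with h2 | h2 <;> simp only [rRel] at h2
    case y l2 =>
      rcases hrel with h2 | h2 <;> simp only [rRel] at h2
      simp only [pot1]; omega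
    case z i2 =>
      rcases hrel with h2 | h2 <;> simp only [rRel] at h2
      simp only [pot1]; omega
    case q i2 t2 =>
      rcases hrel with h2 | h2 <;> simp only [rRel] at h2
  case v'.x j =>
    obtain ⟨w0, hw0⟩ := walk_to_p M N R mem (fpp M N R) N (by omega)
      (by intro m hm
          simp only [gp, fpp, ne_eq, Sym2.eq_iff, RV.p.injEq, Fin.mk.injEq]
          omega)
    have hadj1 : ((RGraph M N R mem).deleteEdges {fpp M N R}).Adj
        (gp M N R N) RV.v' := by
      apply radj
      · simp [gp]
      · show min N (N + 1) = N; omega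
      · simp [gp, fpp, Sym2.eq_iff]
    have hadj2 : ((RGraph M N R mem).deleteEdges {fpp M N R}).Adj
        RV.v' (RV.x j) := by
      apply radj
      · simp
      · trivial
      · simp [fpp, Sym2.eq_iff]
    refine forced_edge hFT (fpp_mem M N R mem) RV.v' (RV.x j)
      (((w0.copy (gp_zero M N R) rfl).concat hadj1).concat hadj2) (N + 2)
      (by simp [hw0]) (by omega) (pot2 M N R)
      (by simp only [pot2, Fin.val_zero]; exact if_neg (by omega)) rfl
      (lift_lip M N R mem (pot2 M N R) (fpp M N R) (pot2_rel M N R mem)) ?_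
    intro c hc hnec
    rw [SimpleGraph.deleteEdges_adj, RGraph, SimpleGraph.fromRel_adj] at hc
    obtain ⟨⟨-, hrel⟩, -⟩ := hc
    cases c
    case p m =>
      rcases hrel with h2 | h2 <;> simp only [rRel] at h2
      simp only [pot2]; split_ifs <;> omega
    case v' =>
      rcases hrel with h2 | h2 <;> simp only [rRel] at h2
      exact absurd rfl hnec
    case x j2 =>
      rcases hrel with h2 | h2 <;> simp only [rRel] at h2
    case y l2 =>
      rcases hrel with h2 | h2 <;> simp only [rRel] at h2
      simp only [pot2]; omega
    case z i2 =>
      rcases hrel with h2 | h2 <;> simp only [rRel] at h2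
      simp only [pot2]; omega
    case q i2 t2 =>
      rcases hrel with h2 | h2 <;> simp only [rRel] at h2
  case p.q k i t =>
    obtain ⟨h1, h2⟩ := h
    have hi := i.isLt
    have ht := t.isLt
    obtain ⟨w0, hw0⟩ := walk_to_q M N R mem i 0 (by omega)
    refine forced_edge hFT (fpQ_mem M N R mem i) (RV.p k) (RV.q i t)
      (w0.copy (gq_zero M N R i)
        (by rw [show i.val + 1 + 0 = i.val + 1 + t.val by omega, gq_eq]))
      (i.val + 1) (by simpa using hw0) (by omega) (potQ M N R mem i)
      (by simp only [potQ, Fin.val_zero]; exact if_pos (Nat.zero_le _))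
      (by simp only [potQ]; split_ifs <;> omega)
      (lift_lip M N R mem (potQ M N R mem i) (fpQ M N R i) (potQ_rel M N R mem i)) ?_
    intro c hc hnec
    rw [SimpleGraph.deleteEdges_adj, RGraph, SimpleGraph.fromRel_adj] at hc
    obtain ⟨⟨-, hrel⟩, -⟩ := hc
    cases c
    case p m =>
      rcases hrel with h3 | h3 <;> simp only [rRel] at h3
      exfalso; apply hnec
      obtain rfl : m = k := Fin.ext (by omega)
      rfl
    case v' =>
      rcases hrel with h3 | h3 <;> simp only [rRel] at h3
    case x j2 =>
      rcases hrel with h3 | h3 <;> simp only [rRel] at h3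
    case y l2 =>
      rcases hrel with h3 | h3 <;> simp only [rRel] at h3
    case z i2 =>
      rcases hrel with h3 | h3 <;> simp only [rRel] at h3
      exact absurd h3.2 (by omega)
    case q i2 t2 =>
      have := i2.isLt; have := t2.isLt
      rcases hrel with h3 | h3 <;> simp only [rRel] at h3
      · exact absurd h3.2 (by omega)
      · simp only [potQ]; split_ifs <;> omega
  case q.q i1 t1 i2 t2 =>
    obtain ⟨h1, h2⟩ := h
    obtain rfl : i1 = i2 := Fin.ext h1
    have hi := i1.isLt
    have ht1 := t1.isLt
    have ht2 := t2.isLt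
    obtain ⟨w0, hw0⟩ := walk_to_q M N R mem i1 t2.val (by omega)
    refine forced_edge hFT (fpQ_mem M N R mem i1) (RV.q i1 t1) (RV.q i1 t2)
      (w0.copy (gq_zero M N R i1) (gq_eq M N R i1 t2))
      (i1.val + 1 + t2.val) (by simpa using hw0) (by omega) (potQ M N R mem i1)
      (by simp only [potQ, Fin.val_zero]; exact if_pos (Nat.zero_le _))
      (by simp only [potQ]; split_ifs <;> omega)
      (lift_lip M N R mem (potQ M N R mem i1) (fpQ M N R i1) (potQ_rel M N R mem i1)) ?_
    intro c hc hnec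
    rw [SimpleGraph.deleteEdges_adj, RGraph, SimpleGraph.fromRel_adj] at hc
    obtain ⟨⟨-, hrel⟩, -⟩ := hc
    cases c
    case p m =>
      rcases hrel with h3 | h3 <;> simp only [rRel] at h3
      exact absurd h3.2 (by omega)
    case v' =>
      rcases hrel with h3 | h3 <;> simp only [rRel] at h3
    case x j2 =>
      rcases hrel with h3 | h3 <;> simp only [rRel] at h3
    case y l2 =>
      rcases hrel with h3 | h3 <;> simp only [rRel] at h3
    case z i3 =>
      rcases hrel with h3 | h3 <;> simp only [rRel] at h3
      simp only [potQ]; split_ifs <;> omega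
    case q i3 t3 =>
      have := i3.isLt; have := t3.isLt
      rcases hrel with h3 | h3 <;> simp only [rRel] at h3
      · exfalso; apply hnec
        obtain rfl : i3 = i1 := Fin.ext h3.1
        obtain rfl : t3 = t1 := Fin.ext (by omega)
        rfl
      · simp only [potQ]; split_ifs <;> omega
  case q.z i1 t i2 =>
    obtain ⟨h1, h2⟩ := h
    obtain rfl : i1 = i2 := Fin.ext h1
    have hi := i1.isLt
    have ht := t.isLt
    obtain ⟨w0, hw0⟩ := walk_to_q M N R mem i1 t.val (by omega)
    have hadj : ((RGraph M N R mem).deleteEdges {fpQ M N R i1}).Adj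
        (RV.q i1 t) (RV.z i1) := by
      apply radj
      · simp
      · exact ⟨rfl, h2⟩
      · simp [fpQ, Sym2.eq_iff]
    refine forced_edge hFT (fpQ_mem M N R mem i1) (RV.q i1 t) (RV.z i1)
      ((w0.copy (gq_zero M N R i1) (gq_eq M N R i1 t)).concat hadj)
      (i1.val + t.val + 2) (by simp [hw0]; omega) (by omega) (potQ M N R mem i1)
      (by simp only [potQ, Fin.val_zero]; exact if_pos (Nat.zero_le _))
      (by simp only [potQ]; split_ifs <;> omega)
      (lift_lip M N R mem (potQ M N R mem i1) (fpQ M N R i1) (potQ_rel M N R mem i1)) ?_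
    intro c hc hnec
    rw [SimpleGraph.deleteEdges_adj, RGraph, SimpleGraph.fromRel_adj] at hc
    obtain ⟨⟨-, hrel⟩, -⟩ := hc
    cases c
    case p m =>
      rcases hrel with h3 | h3 <;> simp only [rRel] at h3
    case v' =>
      rcases hrel with h3 | h3 <;> simp only [rRel] at h3
    case x j2 =>
      rcases hrel with h3 | h3 <;> simp only [rRel] at h3
      simp only [potQ]; split_ifs <;> omega
    case y l2 =>
      rcases hrel with h3 | h3 <;> simp only [rRel] at h3
    case z i3 =>
      rcases hrel with h3 | h3 <;> simp only [rRel] at h3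
    case q i3 t3 =>
      have := i3.isLt; have := t3.isLt
      rcases hrel with h3 | h3 <;> simp only [rRel] at h3
      exfalso; apply hnec
      obtain rfl : i3 = i1 := Fin.ext h3.1
      obtain rfl : t3 = t := Fin.ext (by omega)
      rfl
  case x.z j i =>
    rw [Sym2.eq_swap]
    have hi := i.isLt
    set tL : Fin (5 + 2 * (N - 1 - i.val)) := ⟨4 + 2 * (N - 1 - i.val), by omega⟩ with htL
    obtain ⟨w0, hw0⟩ := walk_to_q M N R mem i tL.val (by omega)
    have hadj1 : ((RGraph M N R mem).deleteEdges {fpQ M N R i}).Adj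
        (RV.q i tL) (RV.z i) := by
      apply radj
      · simp
      · exact ⟨rfl, rfl⟩
      · simp [fpQ, Sym2.eq_iff]
    have hadj2 : ((RGraph M N R mem).deleteEdges {fpQ M N R i}).Adj
        (RV.z i) (RV.x j) := by
      refine SimpleGraph.Adj.symm ?_
      apply radj
      · simp
      · exact h
      · simp [fpQ, Sym2.eq_iff]
    refine forced_edge hFT (fpQ_mem M N R mem i) (RV.z i) (RV.x j)
      (((w0.copy (gq_zero M N R i) (gq_eq M N R i tL)).concat hadj1).concat hadj2)
      (i.val + (4 + 2 * (N - 1 - i.val)) + 3) (by simp [hw0, htL]; omega) (by omega)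
      (potQ M N R mem i)
      (by simp only [potQ, Fin.val_zero]; exact if_pos (Nat.zero_le _))
      (by simp only [potQ]; rw [if_pos h]; omega)
      (lift_lip M N R mem (potQ M N R mem i) (fpQ M N R i) (potQ_rel M N R mem i)) ?_
    intro c hc hnec
    rw [SimpleGraph.deleteEdges_adj, RGraph, SimpleGraph.fromRel_adj] at hc
    obtain ⟨⟨-, hrel⟩, -⟩ := hc
    cases c
    case p m =>
      rcases hrel with h3 | h3 <;> simp only [rRel] at h3
      simp only [potQ]; split_ifs <;> omega
    case v' =>
      rcases hrel with h3 | h3 <;> simp only [rRel] at h3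
      simp only [potQ]; omega
    case x j2 =>
      rcases hrel with h3 | h3 <;> simp only [rRel] at h3
    case y l2 =>
      rcases hrel with h3 | h3 <;> simp only [rRel] at h3
      simp only [potQ]; omega
    case z i3 =>
      rcases hrel with h3 | h3 <;> simp only [rRel] at h3
      rcases eq_or_ne i3 i with rfl | hne3
      · exact absurd rfl hnec
      · have hv : i3.val ≠ i.val := fun hh => hne3 (Fin.ext hh)
        simp only [potQ]; split_ifs <;> omega
    case q i3 t3 =>
      rcases hrel with h3 | h3 <;> simp only [rRel] at h3

/-- Every edge FT-BFS structure for the reduction graph `G(U,𝒮)` with respect to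
the source `s = p_0` contains every edge of `Ẽ = E(G) ∖ E_XY`. -/
theorem reduction_forced_edges (M N : ℕ) (hM : 1 ≤ M) (hN : 1 ≤ N)
    (mem : Fin M → Fin N → Prop) (hcover : ∀ i : Fin N, ∃ j : Fin M, mem j i) :
    ∀ H : SimpleGraph (RV M N ((M * N) ^ 3)),
      IsFTBFS (RGraph M N ((M * N) ^ 3) mem) H (RV.p 0) →
      (RGraph M N ((M * N) ^ 3) mem).edgeSet \ EXY M N ((M * N) ^ 3) ⊆ H.edgeSet := by
  intro H hFT e he
  have hR : 0 < (M * N) ^ 3 := by positivity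
  obtain ⟨heG, hexy⟩ := he
  revert heG hexy
  induction e using Sym2.ind with
  | _ u v =>
    intro heG hexy
    rw [SimpleGraph.mem_edgeSet, RGraph, SimpleGraph.fromRel_adj] at heG
    obtain ⟨hne, hrel | hrel⟩ := heG
    · exact main_rel M N _ hM hN hR mem H hFT u v hne hrel hexy
    · rw [Sym2.eq_swap]
      exact main_rel M N _ hM hN hR mem H hFT v u hne.symm hrel
        (by rw [Sym2.eq_swap]; exact hexy)
end

section
/- Let ⟨U,𝒮⟩ be a Set-Cover instance with universe U = {u_1,…,u_N} and sets 𝒮 = {S_1,…,S_M} covering U (N, M ≥ 1), let G = G(U,𝒮) be the reduction graph with source s, and let H be a spanning subgraph of G that is an edge FT-BFS structure for G with respect to s. Let κ(H) = min_{1 ≤ ℓ ≤ R} |{ x_j : (x_j, y_ℓ) ∈ E(H) }|. Then there exists a subcollection 𝒮′ ⊆ 𝒮 with |𝒮′| ≤ κ(H) and ⋃ 𝒮′ = U. -/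
open SimpleGraph

/- ### Auxiliary development -/

section Aux
variable {M N R : ℕ} (mem : Fin M → Fin N → Prop) (i : Fin N)

open Classical in
/-- The potential function: a `1`-Lipschitz function on `G ∖ (p_i, p_{i+1})`
vanishing at the source `p 0`. -/
noncomputable def phi : RV M N R → ℕ
  | .x j => if mem j i then 2*N+5-i.val else 2*N+6-i.val
  | .z i' => if i'.val ≤ i.val then min (2*N+4-i'.val) (2*N+6-i.val) else 2*N+6-i.val
  | .p k => if k.val ≤ i.val then k.val else 2*N+6-i.val
  | .v' => 2*N+6-i.val
  | .y _ => 2*N+6-i.val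
  | .q i' k => if i'.val ≤ i.val then min (i'.val+1+k.val) (2*N+7-i.val) else 2*N+6-i.val

/-- The deleted edge `(p_i, p_{i+1})`. -/
def de : Sym2 (RV M N R) :=
  s(RV.p ⟨i.val, by have := i.isLt; omega⟩, RV.p ⟨i.val+1, by have := i.isLt; omega⟩)

/-- The graph `G ∖ (p_i, p_{i+1})`. -/
def Gdel : SimpleGraph (RV M N R) :=
  (RGraph M N R mem).deleteEdges {de (M := M) (R := R) i}

lemma adj_del {u v : RV M N R} (h : rRel M N R mem u v) (hne : u ≠ v)
    (hne2 : s(u,v) ≠ de (M := M) (R := R) i) : (Gdel mem i).Adj u v := by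
  simp only [Gdel, deleteEdges_adj, RGraph, fromRel_adj, Set.mem_singleton_iff]
  exact ⟨⟨hne, Or.inl h⟩, hne2⟩

lemma gdel_adj_iff {u v : RV M N R} :
    (Gdel mem i).Adj u v ↔ (u ≠ v ∧ (rRel M N R mem u v ∨ rRel M N R mem v u))
      ∧ s(u,v) ≠ de (M := M) (R := R) i := by
  simp only [Gdel, deleteEdges_adj, RGraph, fromRel_adj, Set.mem_singleton_iff]

lemma phi_lip {u v : RV M N R} (h : rRel M N R mem u v)
    (hne : s(u,v) ≠ de (M := M) (R := R) i) :
    phi mem i u ≤ phi mem i v + 1 ∧ phi mem i v ≤ phi mem i u + 1 := by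
  have hi := i.isLt
  cases u <;> cases v <;> simp only [rRel] at h <;> try exact h.elim
  case x.z j i' =>
    simp only [phi]
    split_ifs with h1 h2 h2 <;> try (constructor <;> omega)
    · rcases lt_or_eq_of_le h2 with hlt | heq
      · constructor <;> omega
      · exact absurd (show mem j i by rwa [show i' = i from Fin.ext heq] at h) h1
  case x.y j l =>
    simp only [phi]; split_ifs <;> constructor <;> omega
  case p.p k k' =>
    have hki : k.val ≠ i.val := by
      intro hk
      apply hne
      simp only [de, Sym2.eq_iff]
      left
      constructor <;> (congr 1; exact Fin.ext (by simp; omega))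
    have hk2 := k.isLt; have hk2' := k'.isLt
    simp only [phi]; split_ifs <;> constructor <;> omega
  case p.q k i' k' =>
    simp only [phi]; split_ifs <;> constructor <;> omega
  case p.v' k =>
    simp only [phi]; split_ifs <;> constructor <;> omega
  case p.y k l =>
    simp only [phi]; split_ifs <;> constructor <;> omega
  case p.x k j =>
    simp only [phi]; split_ifs <;> constructor <;> omega
  case v'.x j =>
    simp only [phi]; split_ifs <;> constructor <;> omega
  case q.q i' k i'' k' =>
    have := i'.isLt; have := i''.isLt; have := k.isLt; have := k'.isLt
    simp only [phi]; split_ifs <;> constructor <;> omega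
  case q.z i' k i'' =>
    have := i'.isLt; have := i''.isLt
    simp only [phi]; split_ifs <;> constructor <;> omega

lemma phi_lip' {u v : RV M N R} (h : (Gdel mem i).Adj u v) :
    phi mem i v ≤ phi mem i u + 1 := by
  rw [gdel_adj_iff] at h
  obtain ⟨⟨-, hr | hr⟩, hne⟩ := h
  · exact (phi_lip mem i hr hne).2
  · exact (phi_lip mem i hr (fun hc => hne (Sym2.eq_swap.trans hc))).1

lemma phi_le_walk : ∀ {u v : RV M N R} (W : (Gdel mem i).Walk u v),
    phi mem i v ≤ phi mem i u + W.length := by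
  intro u v W
  induction W with
  | nil => simp
  | cons h W ih =>
    have := phi_lip' mem i h
    rw [Walk.length_cons]
    omega

-- Walk along the prefix of P
lemma walk_p : ∀ n : ℕ, ∀ (k : Fin (N+2)), k.val = n → k.val ≤ i.val →
    ∃ W : (Gdel (R := R) mem i).Walk (RV.p 0) (RV.p k), W.length = k.val := by
  intro n
  induction n with
  | zero =>
    intro k hk _
    have : k = 0 := Fin.ext (by simpa using hk)
    subst this
    exact ⟨Walk.nil, by simp⟩
  | succ m ih =>
    intro k hk hki
    have hi := i.isLt
    have hkN := k.isLt
    obtain ⟨W, hW⟩ := ih ⟨m, by omega⟩ rfl (by show m ≤ i.val; omega)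
    refine ⟨W.concat (adj_del mem i ?_ ?_ ?_), ?_⟩
    · show m + 1 = k.val; omega
    · intro hc
      have := congrArg (fun t : RV M N R => match t with | .p a => a.val | _ => 0) hc
      simp at this; omega
    · intro hEq
      rcases Sym2.eq_iff.mp hEq with ⟨h1, h2⟩ | ⟨h1, h2⟩ <;>
        (injection h1 with h1; injection h2 with h2;
         have h1 := congrArg Fin.val h1; have h2 := congrArg Fin.val h2;
         simp at h1 h2; omega)
    · rw [Walk.length_concat, hW]; show m + 1 = k.val; omega

-- Walk along Q_i
lemma walk_q : ∀ n : ℕ, ∀ (k : Fin (5 + 2*(N - 1 - i.val))), k.val = n →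
    ∃ W : (Gdel (R := R) mem i).Walk (RV.p 0) (RV.q i k), W.length = i.val + 1 + k.val := by
  intro n
  induction n with
  | zero =>
    intro k hk
    have hi := i.isLt
    obtain ⟨W, hW⟩ :=
      walk_p (R := R) mem i i.val ⟨i.val, by omega⟩ rfl (by show i.val ≤ i.val; omega)
    refine ⟨W.concat (adj_del mem i ?_ ?_ ?_), ?_⟩
    · exact ⟨rfl, hk⟩
    · intro hc; exact nomatch hc
    · intro hEq
      rcases Sym2.eq_iff.mp hEq with ⟨h1, h2⟩ | ⟨h1, h2⟩ <;> exact nomatch h2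
    · rw [Walk.length_concat, hW]; show i.val + 1 = i.val + 1 + k.val; omega
  | succ m ih =>
    intro k hk
    have hkb := k.isLt
    obtain ⟨W, hW⟩ := ih ⟨m, by omega⟩ rfl
    refine ⟨W.concat (adj_del mem i ?_ ?_ ?_), ?_⟩
    · exact ⟨rfl, by show m + 1 = k.val; omega⟩
    · intro hc
      injection hc with h1 h2
      have h2 := congrArg Fin.val h2
      simp at h2; omega
    · intro hEq
      rcases Sym2.eq_iff.mp hEq with ⟨h1, h2⟩ | ⟨h1, h2⟩ <;> exact nomatch h1
    · rw [Walk.length_concat, hW]; show i.val + 1 + m + 1 = i.val + 1 + k.val; omega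

-- Walk to z_i
lemma walk_z :
    ∃ W : (Gdel (R := R) mem i).Walk (RV.p 0) (RV.z i), W.length = 2*N + 4 - i.val := by
  have hi := i.isLt
  obtain ⟨W, hW⟩ :=
    walk_q (R := R) mem i (4 + 2*(N - 1 - i.val)) ⟨4 + 2*(N - 1 - i.val), by omega⟩ rfl
  refine ⟨W.concat (adj_del mem i ?_ ?_ ?_), ?_⟩
  · exact ⟨rfl, rfl⟩
  · intro hc; exact nomatch hc
  · intro hEq
    rcases Sym2.eq_iff.mp hEq with ⟨h1, h2⟩ | ⟨h1, h2⟩ <;> exact nomatch h1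
  · rw [Walk.length_concat, hW]
    show i.val + 1 + (4 + 2*(N - 1 - i.val)) + 1 = 2*N + 4 - i.val; omega

-- Walk to y_l
lemma walk_y (l : Fin R) (j0 : Fin M) (hj0 : mem j0 i) :
    ∃ W : (Gdel (R := R) mem i).Walk (RV.p 0) (RV.y l), W.length = 2*N + 6 - i.val := by
  have hi := i.isLt
  obtain ⟨W, hW⟩ := walk_z (R := R) mem i
  have hzx : (Gdel (R := R) mem i).Adj (RV.z i) (RV.x j0) := by
    refine (adj_del mem i (show rRel M N R mem (RV.x j0) (RV.z i) from hj0) ?_ ?_).symm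
    · intro hc; exact nomatch hc
    · intro hEq
      rcases Sym2.eq_iff.mp hEq with ⟨h1, h2⟩ | ⟨h1, h2⟩ <;> exact nomatch h1
  have hxy : (Gdel (R := R) mem i).Adj (RV.x j0) (RV.y l) := by
    refine adj_del mem i (show rRel M N R mem (RV.x j0) (RV.y l) from trivial) ?_ ?_
    · intro hc; exact nomatch hc
    · intro hEq
      rcases Sym2.eq_iff.mp hEq with ⟨h1, h2⟩ | ⟨h1, h2⟩ <;> exact nomatch h1
  refine ⟨(W.concat hzx).concat hxy, ?_⟩
  rw [Walk.length_concat, Walk.length_concat, hW]; omega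

end Aux

lemma walk_head {V : Type*} {G : SimpleGraph V} {a b : V} (W : G.Walk a b) {n : ℕ}
    (h : W.length = n + 1) :
    ∃ u, G.Adj a u ∧ ∃ W' : G.Walk u b, W'.length = n := by
  cases W with
  | nil => simp at h
  | cons hadj W' => exact ⟨_, hadj, W', by simpa using h⟩

lemma walk_penult {V : Type*} {G : SimpleGraph V} {a b : V} (W : G.Walk a b) {n : ℕ}
    (h : W.length = n + 1) :
    ∃ u, G.Adj u b ∧ ∃ W' : G.Walk a u, W'.length = n := by
  obtain ⟨u, hadj, W', hW'⟩ := walk_head W.reverse (by simpa using h)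
  exact ⟨u, hadj.symm, W'.reverse, by simpa using hW'⟩

/-- Key lemma: for every `i` and every `l`, the FT-BFS structure `H`
must contain an edge `(x_j, y_l)` with `mem j i`. -/
lemma key_lemma {M N R : ℕ} (mem : Fin M → Fin N → Prop)
    (hcover : ∀ i : Fin N, ∃ j : Fin M, mem j i)
    (H : SimpleGraph (RV M N R))
    (hH : IsFTBFS (RGraph M N R mem) H (RV.p 0)) (i : Fin N) (l : Fin R) :
    ∃ j : Fin M, mem j i ∧ s(RV.x j, RV.y l) ∈ H.edgeSet := by
  obtain ⟨j0, hj0⟩ := hcover i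
  have hi := i.isLt
  set e : Sym2 (RV M N R) := de (M := M) (R := R) i with he
  have hGdel : (RGraph M N R mem).deleteEdges {e} = Gdel mem i := rfl
  have heG : e ∈ (RGraph M N R mem).edgeSet := by
    have hadj : (RGraph M N R mem).Adj (RV.p ⟨i.val, by omega⟩) (RV.p ⟨i.val+1, by omega⟩) := by
      simp only [RGraph, fromRel_adj]
      refine ⟨?_, Or.inl rfl⟩
      intro hc
      injection hc with hc
      have h2 : i.val = i.val + 1 := congrArg Fin.val hc
      omega
    exact (mem_edgeSet _).mpr hadj
  -- distance in `G ∖ e`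
  obtain ⟨W0, hW0⟩ := walk_y mem i l j0 hj0
  have hreachG : ((RGraph M N R mem).deleteEdges {e}).Reachable (RV.p 0) (RV.y l) := by
    rw [hGdel]; exact ⟨W0⟩
  have hphi0 : phi (R := R) mem i (RV.p 0) = 0 := by
    simp [phi]
  have hphiy : phi (R := R) mem i (RV.y l) = 2*N+6-i.val := rfl
  have hdistG : ((RGraph M N R mem).deleteEdges {e}).dist (RV.p 0) (RV.y l)
      = 2*N+6-i.val := by
    rw [hGdel] at hreachG ⊢
    refine le_antisymm (hW0 ▸ SimpleGraph.dist_le W0) ?_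
    obtain ⟨P0, hP0⟩ := hreachG.exists_walk_length_eq_dist
    have := phi_le_walk mem i P0
    rw [hphi0, hphiy] at this
    omega
  obtain ⟨hiff, hdeq⟩ := hH.2 e heG (RV.y l)
  have hreachH := hiff.mpr hreachG
  have hdistH : (H.deleteEdges {e}).dist (RV.p 0) (RV.y l) = 2*N+6-i.val :=
    (hdeq hreachG).trans hdistG
  obtain ⟨W, hW⟩ := hreachH.exists_walk_length_eq_dist
  have hWlen : W.length = (2*N+5-i.val) + 1 := by rw [hW, hdistH]; omega
  obtain ⟨u, hadj, W', hW'⟩ := walk_penult W hWlen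
  have hle' : H.deleteEdges {e} ≤ Gdel mem i := by
    rw [← hGdel]
    intro a b hab
    rw [deleteEdges_adj] at hab ⊢
    exact ⟨hH.1 hab.1, hab.2⟩
  have hadjG : (Gdel mem i).Adj u (RV.y l) := hle' hadj
  have hphiu : phi (R := R) mem i u ≤ 2*N+5-i.val := by
    have h1 := phi_le_walk mem i (W'.mapLe hle')
    have h2 : (W'.mapLe hle').length = W'.length := by simp
    rw [hphi0, h2, hW'] at h1
    omega
  have hedgeH : s(u, RV.y l) ∈ H.edgeSet := by
    rw [deleteEdges_adj] at hadj
    exact (mem_edgeSet _).mpr hadj.1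
  rw [gdel_adj_iff] at hadjG
  obtain ⟨⟨hne2, hcase⟩, -⟩ := hadjG
  cases u with
  | x j =>
    refine ⟨j, ?_, hedgeH⟩
    by_contra hmem
    have : phi (R := R) mem i (RV.x j) = 2*N+6-i.val := by simp [phi, hmem]
    omega
  | p k =>
    rcases hcase with h | h
    · have hphik : phi (R := R) mem i (RV.p k) = 2*N+6-i.val := by
        have hkN : k.val = N + 1 := h
        simp only [phi]
        rw [if_neg (by omega)]
      omega
    · exact absurd h (by simp [rRel])
  | z i' => rcases hcase with h | h <;> exact absurd h (by simp [rRel])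
  | v' => rcases hcase with h | h <;> exact absurd h (by simp [rRel])
  | y l' => rcases hcase with h | h <;> exact absurd h (by simp [rRel])
  | q i' k => rcases hcase with h | h <;> exact absurd h (by simp [rRel])

/-- From any edge FT-BFS structure `H` for the reduction graph `G(U,𝒮)` w.r.t. the
source `s = p_0` one obtains a set cover of size at most
`κ(H) = min_l |{ j : (x_j, y_l) ∈ E(H) }|`. -/
theorem reduction_ftbfs_gives_cover (M N : ℕ) (hM : 1 ≤ M) (hN : 1 ≤ N)
    (mem : Fin M → Fin N → Prop) (hcover : ∀ i : Fin N, ∃ j : Fin M, mem j i)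
    (H : SimpleGraph (RV M N ((M * N) ^ 3)))
    (hH : IsFTBFS (RGraph M N ((M * N) ^ 3) mem) H (RV.p 0)) :
    ∃ J : Finset (Fin M),
      J.card ≤ sInf (Set.range fun l : Fin ((M * N) ^ 3) =>
        {j : Fin M | s(RV.x j, RV.y l) ∈ H.edgeSet}.ncard) ∧
      ∀ i : Fin N, ∃ j ∈ J, mem j i := by
  classical
  have hR : 0 < (M * N) ^ 3 := pow_pos (Nat.mul_pos hM hN) 3
  have hne : (Set.range fun l : Fin ((M * N) ^ 3) =>
      {j : Fin M | s(RV.x j, RV.y l) ∈ H.edgeSet}.ncard).Nonempty :=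
    ⟨_, ⟨⟨0, hR⟩, rfl⟩⟩
  obtain ⟨l0, hl0⟩ := Nat.sInf_mem hne
  have hfin : {j : Fin M | s(RV.x j, RV.y l0) ∈ H.edgeSet}.Finite := Set.toFinite _
  refine ⟨hfin.toFinset, ?_, ?_⟩
  · rw [← hl0, ← Set.ncard_eq_toFinset_card _ hfin]
  · intro i
    obtain ⟨j, hji, hedge⟩ := key_lemma mem hcover H hH i l0
    exact ⟨j, hfin.mem_toFinset.mpr hedge, hji⟩
end

section
/- Let ⟨U,𝒮⟩ be a Set-Cover instance with universe U = {u_1,…,u_N} and sets 𝒮 = {S_1,…,S_M} covering U (N, M ≥ 1), and let G = G(U,𝒮) be the reduction graph with source s. If there exists a subcollection 𝒮′ ⊆ 𝒮 with |𝒮′| = κ and ⋃ 𝒮′ = U, then there exists a spanning subgraph H of G that is an edge FT-BFS structure for G with respect to s and has |E(H)| = |Ẽ| + κ·R; in particular Cost*(s,G) ≤ |Ẽ| + κ·R. -/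
open SimpleGraph

/-- `Cost*(s,G)`: the minimum number of edges of an edge FT-BFS structure for `G`
with respect to `s`. -/
noncomputable def CostStar {V : Type*} (G : SimpleGraph V) (s : V) : ℕ :=
  sInf {m : ℕ | ∃ H : SimpleGraph V, IsFTBFS G H s ∧ H.edgeSet.ncard = m}


instance (M N R : ℕ) : Finite (RV M N R) := by
  let f : RV M N R → (Fin M ⊕ Fin N ⊕ Fin (N+2) ⊕ Unit ⊕ Fin R ⊕ Σ i : Fin N, Fin (5+2*(N-1-i.val))) :=
    fun v => match v with
    | .x j => .inl j
    | .z i => .inr (.inl i)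
    | .p k => .inr (.inr (.inl k))
    | .v' => .inr (.inr (.inr (.inl ())))
    | .y l => .inr (.inr (.inr (.inr (.inl l))))
    | .q i k => .inr (.inr (.inr (.inr (.inr ⟨i,k⟩))))
  apply Finite.of_injective f
  intro a b h
  cases a <;> cases b <;> simp_all [f]

section Infra

variable {M N R : ℕ} {mem : Fin M → Fin N → Prop}

lemma G_adj_iff {a b : RV M N R} :
    (RGraph M N R mem).Adj a b ↔ a ≠ b ∧ (rRel M N R mem a b ∨ rRel M N R mem b a) :=
  SimpleGraph.fromRel_adj _ _ _

lemma gadj_pp (k k' : Fin (N+2)) (h : k.val + 1 = k'.val) :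
    (RGraph M N R mem).Adj (.p k) (.p k') := by
  rw [G_adj_iff]
  exact ⟨by simp [Fin.ext_iff]; omega, Or.inl h⟩

lemma gadj_pv (k : Fin (N+2)) (h : k.val = N) : (RGraph M N R mem).Adj (.p k) .v' := by
  rw [G_adj_iff]; exact ⟨by simp, Or.inl h⟩

lemma gadj_vx (j : Fin M) : (RGraph M N R mem).Adj .v' (.x j) := by
  rw [G_adj_iff]; exact ⟨by simp, Or.inl trivial⟩

lemma gadj_px (k : Fin (N+2)) (j : Fin M) (h : k.val = N+1) :
    (RGraph M N R mem).Adj (.p k) (.x j) := by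
  rw [G_adj_iff]; exact ⟨by simp, Or.inl h⟩

lemma gadj_py (k : Fin (N+2)) (l : Fin R) (h : k.val = N+1) :
    (RGraph M N R mem).Adj (.p k) (.y l) := by
  rw [G_adj_iff]; exact ⟨by simp, Or.inl h⟩

lemma gadj_xy (j : Fin M) (l : Fin R) : (RGraph M N R mem).Adj (.x j) (.y l) := by
  rw [G_adj_iff]; exact ⟨by simp, Or.inl trivial⟩

lemma gadj_xz (j : Fin M) (i : Fin N) (h : mem j i) :
    (RGraph M N R mem).Adj (.x j) (.z i) := by
  rw [G_adj_iff]; exact ⟨by simp, Or.inl h⟩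

/-- neighbors of `x j` -/
lemma adj_to_x {c : RV M N R} {j : Fin M} (h : (RGraph M N R mem).Adj c (.x j)) :
    (∃ i, c = .z i ∧ mem j i) ∨ c = .v' ∨ (∃ k : Fin (N+2), c = .p k ∧ k.val = N+1) ∨
      (∃ l, c = .y l) := by
  rw [G_adj_iff] at h
  obtain ⟨-, h | h⟩ := h <;> cases c <;> simp_all [rRel]

/-- neighbors of `y l` -/
lemma adj_to_y {c : RV M N R} {l : Fin R} (h : (RGraph M N R mem).Adj c (.y l)) :
    (∃ k : Fin (N+2), c = .p k ∧ k.val = N+1) ∨ (∃ j, c = .x j) := by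
  rw [G_adj_iff] at h
  obtain ⟨-, h | h⟩ := h <;> cases c <;> simp_all [rRel]

end Infra

section Psi
variable {M N R : ℕ} {mem : Fin M → Fin N → Prop}

def psi (M N R : ℕ) : RV M N R → ℕ
  | .p k => k.val
  | .v' => N+1
  | .x _ => N+1
  | .y _ => N+1
  | .z _ => N
  | .q i k => min (i.val+1+k.val) (3*N+3-2*i.val-k.val)

lemma psi_rel {a b : RV M N R} (h : rRel M N R mem a b) :
    psi M N R b ≤ psi M N R a + 1 ∧ psi M N R a ≤ psi M N R b + 1 := by
  cases a <;> cases b <;> simp only [rRel] at h <;> simp only [psi]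
  case x.z j i => omega
  case p.p k k' => omega
  case p.q k i k' => have := i.isLt; omega
  case q.q i k i' k' => have := i.isLt; have := k.isLt; have := k'.isLt; omega
  case q.z i k i' => have := i.isLt; have := k.isLt; omega
  case p.v' k => have := k.isLt; omega
  case p.y k l => have := k.isLt; omega
  case p.x k j => have := k.isLt; omega
  case v'.x j => omega
  case x.y j l => omega

lemma psi_le_walk : ∀ {u v : RV M N R} (w : (RGraph M N R mem).Walk u v),
    psi M N R v ≤ psi M N R u + w.length := by
  intro u v w
  induction w with
  | nil => simp
  | @cons u b v h w ih =>
    rw [G_adj_iff] at h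
    obtain ⟨-, h | h⟩ := h
    · have := (psi_rel (mem := mem) h).1
      simp only [Walk.length_cons]; omega
    · have := (psi_rel (mem := mem) h).2
      simp only [Walk.length_cons]; omega

end Psi

section Del
variable {M N R : ℕ} {mem : Fin M → Fin N → Prop} {J : Finset (Fin M)}

def DD (M N R : ℕ) (J : Finset (Fin M)) : Set (Sym2 (RV M N R)) :=
  {e | ∃ j l, j ∉ J ∧ e = s(RV.x j, RV.y l)}

lemma He_adj {e : Sym2 (RV M N R)} {a b : RV M N R}
    (hG : (RGraph M N R mem).Adj a b) (hD : s(a,b) ∉ DD M N R J) (he : s(a,b) ≠ e) :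
    (((RGraph M N R mem).deleteEdges (DD M N R J)).deleteEdges {e}).Adj a b := by
  simp only [deleteEdges_adj, Set.mem_singleton_iff]
  exact ⟨⟨hG, hD⟩, he⟩

lemma not_DD_pp {k k' : Fin (N+2)} : s(RV.p k, RV.p k') ∉ DD M N R J := by
  simp [DD, Sym2.eq_iff]

lemma not_DD_pv {k : Fin (N+2)} : s(RV.p k, (RV.v' : RV M N R)) ∉ DD M N R J := by
  simp [DD, Sym2.eq_iff]

lemma not_DD_vx {j : Fin M} : s((RV.v' : RV M N R), RV.x j) ∉ DD M N R J := by
  simp [DD, Sym2.eq_iff]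

lemma not_DD_px {k : Fin (N+2)} {j : Fin M} : s(RV.p k, (RV.x j : RV M N R)) ∉ DD M N R J := by
  simp [DD, Sym2.eq_iff]

lemma not_DD_py {k : Fin (N+2)} {l : Fin R} : s(RV.p k, (RV.y l : RV M N R)) ∉ DD M N R J := by
  simp [DD, Sym2.eq_iff]

lemma not_DD_xz {j : Fin M} {i : Fin N} : s(RV.x j, (RV.z i : RV M N R)) ∉ DD M N R J := by
  simp [DD, Sym2.eq_iff]

lemma not_DD_xy {j : Fin M} {l : Fin R} (hj : j ∈ J) :
    s(RV.x j, (RV.y l : RV M N R)) ∉ DD M N R J := by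
  simp only [DD, Set.mem_setOf_eq, Sym2.eq_iff]
  rintro ⟨j', l', hj', (⟨h1, h2⟩ | ⟨h1, h2⟩)⟩
  · cases h1; exact hj' hj
  · cases h1

lemma mem_DD_xy {j : Fin M} {l : Fin R} (hj : j ∉ J) :
    s(RV.x j, (RV.y l : RV M N R)) ∈ DD M N R J := ⟨j, l, hj, rfl⟩

/-- walk along the initial path in an edge-deleted graph -/
lemma walkUp (G' : SimpleGraph (RV M N R))
    (hP : ∀ (k : ℕ) (h : k + 1 < N + 2), G'.Adj (.p ⟨k, by omega⟩) (.p ⟨k+1, h⟩)) :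
    ∀ (k : ℕ) (hk : k < N + 2),
      ∃ w : G'.Walk (.p ⟨0, by omega⟩) (.p ⟨k, hk⟩), w.length = k := by
  intro k
  induction k with
  | zero => intro hk; exact ⟨.nil, rfl⟩
  | succ k ih =>
    intro hk
    obtain ⟨w, hw⟩ := ih (by omega)
    exact ⟨w.concat (hP k hk), by rw [Walk.length_concat, hw]⟩

end Del

section Surgery
variable {M N R : ℕ} {mem : Fin M → Fin N → Prop} {J : Finset (Fin M)}

lemma psi_bound {e : Sym2 (RV M N R)} {v : RV M N R}
    (w : ((RGraph M N R mem).deleteEdges {e}).Walk v (.p ⟨0, by omega⟩)) :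
    psi M N R v ≤ w.length := by
  have h := psi_le_walk ((w.mapLe (deleteEdges_le {e})).reverse)
  rw [Walk.length_reverse, Walk.length_mapLe] at h
  simpa [psi] using h

lemma routeY (e : Sym2 (RV M N R)) (l : Fin R)
    (heP : ∀ (k k' : Fin (N+2)), e ≠ s(RV.p k, RV.p k'))
    (hey : e ≠ s(RV.p ⟨N+1, by omega⟩, RV.y l)) :
    ∃ w : (((RGraph M N R mem).deleteEdges (DD M N R J)).deleteEdges {e}).Walk
      (.p ⟨0, by omega⟩) (.y l), w.length = N + 2 := by
  obtain ⟨w, hw⟩ := walkUp (((RGraph M N R mem).deleteEdges (DD M N R J)).deleteEdges {e})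
    (fun k h => He_adj (gadj_pp _ _ (by simp)) not_DD_pp (fun hc => heP _ _ hc.symm))
    (N+1) (by omega)
  exact ⟨w.concat (He_adj (gadj_py _ _ (by simp)) not_DD_py (Ne.symm hey)),
    by rw [Walk.length_concat, hw]⟩

lemma routeX (e : Sym2 (RV M N R)) (j : Fin M)
    (heP : ∀ (k k' : Fin (N+2)), e ≠ s(RV.p k, RV.p k'))
    (hev : e ≠ s(RV.p ⟨N, by omega⟩, RV.v'))
    (hvx : e ≠ s((RV.v' : RV M N R), RV.x j)) :
    ∃ w : (((RGraph M N R mem).deleteEdges (DD M N R J)).deleteEdges {e}).Walk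
      (.p ⟨0, by omega⟩) (.x j), w.length = N + 2 := by
  obtain ⟨w, hw⟩ := walkUp (((RGraph M N R mem).deleteEdges (DD M N R J)).deleteEdges {e})
    (fun k h => He_adj (gadj_pp _ _ (by simp)) not_DD_pp (fun hc => heP _ _ hc.symm))
    N (by omega)
  refine ⟨(w.concat (He_adj (gadj_pv _ rfl) not_DD_pv (Ne.symm hev))).concat
    (He_adj (gadj_vx j) not_DD_vx (Ne.symm hvx)), by rw [Walk.length_concat, Walk.length_concat, hw]⟩

lemma surgery (hN : 1 ≤ N) (hJcov : ∀ i, ∃ j ∈ J, mem j i) (e : Sym2 (RV M N R)) :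
    ∀ (n : ℕ) (v : RV M N R)
      (w : ((RGraph M N R mem).deleteEdges {e}).Walk v (.p ⟨0, by omega⟩)),
      w.length ≤ n →
      ∃ w' : (((RGraph M N R mem).deleteEdges (DD M N R J)).deleteEdges {e}).Walk v
          (.p ⟨0, by omega⟩),
        w'.length ≤ w.length := by
  intro n
  induction n with
  | zero =>
    intro v w hw
    cases w with
    | nil => exact ⟨.nil, le_rfl⟩
    | cons h w => simp only [Walk.length_cons] at hw; omega
  | succ n ih =>
    intro v w hw
    cases w with
    | nil => exact ⟨.nil, le_rfl⟩
    | @cons _ b _ hadj rest =>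
      have hGvb : (RGraph M N R mem).Adj v b := ((deleteEdges_adj).mp hadj).1
      have hevb : s(v, b) ≠ e := by
        have := ((deleteEdges_adj).mp hadj).2; simpa using this
      by_cases hD : s(v, b) ∈ DD M N R J
      case neg =>
        obtain ⟨w', hw'⟩ := ih b rest (by simp only [Walk.length_cons] at hw; omega)
        exact ⟨.cons (He_adj hGvb hD hevb) w', by simp only [Walk.length_cons]; omega⟩
      case pos =>
        obtain ⟨j, l, hj, hvb⟩ := hD
        rw [Sym2.eq_iff] at hvb
        cases rest with
        | nil =>
          exfalso; rcases hvb with ⟨hv, hb⟩ | ⟨hv, hb⟩ <;> cases hb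
        | @cons _ c _ hadj2 w₂ =>
          have hw₂n : w₂.length ≤ n := by simp only [Walk.length_cons] at hw; omega
          obtain ⟨w₂', hw₂'⟩ := ih c w₂ hw₂n
          have hGbc : (RGraph M N R mem).Adj b c := ((deleteEdges_adj).mp hadj2).1
          have hpsic : psi M N R c ≤ w₂.length := psi_bound w₂
          rcases hvb with ⟨hv, hb⟩ | ⟨hv, hb⟩
          · -- v = x j, b = y l
            subst hv; subst hb
            rcases adj_to_y hGbc.symm with ⟨k, hc, hk⟩ | ⟨j'', hc⟩
            · subst hc
              by_cases he1 : e = s(.p k, .x j)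
              · obtain ⟨r, hr⟩ := routeX (J := J) e j
                  (by subst he1; intro k1 k2; simp [Sym2.eq_iff])
                  (by subst he1; simp [Sym2.eq_iff])
                  (by subst he1; simp [Sym2.eq_iff])
                refine ⟨r.reverse, ?_⟩
                have hcv : psi M N R (.p k) = N + 1 := by simp [psi, hk]
                simp only [Walk.length_reverse, hr, Walk.length_cons]
                omega
              · exact ⟨.cons ((He_adj (gadj_px k j hk) not_DD_px
                  (fun h => he1 h.symm)).symm) w₂', by simp only [Walk.length_cons]; omega⟩
            · subst hc
              by_cases hjj : j'' = j
              · subst hjj; exact ⟨w₂', by simp only [Walk.length_cons]; omega⟩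
              · by_cases he1 : e = s(.x j, .v') ∨ e = s(.v', .x j'')
                · have h1 : (((RGraph M N R mem).deleteEdges (DD M N R J)).deleteEdges {e}).Adj
                      (.x j) (.p ⟨N+1, by omega⟩) :=
                    (He_adj (gadj_px ⟨N+1, by omega⟩ j rfl) not_DD_px
                      (by rcases he1 with h | h <;> subst h <;> simp [Sym2.eq_iff])).symm
                  have h2 : (((RGraph M N R mem).deleteEdges (DD M N R J)).deleteEdges {e}).Adj
                      (.p ⟨N+1, by omega⟩) (.x j'') :=
                    He_adj (gadj_px ⟨N+1, by omega⟩ j'' rfl) not_DD_px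
                      (by rcases he1 with h | h <;> subst h <;> simp [Sym2.eq_iff])
                  exact ⟨.cons h1 (.cons h2 w₂'), by simp only [Walk.length_cons]; omega⟩
                · push_neg at he1
                  have h1 : (((RGraph M N R mem).deleteEdges (DD M N R J)).deleteEdges {e}).Adj
                      (.x j) .v' :=
                    He_adj (gadj_vx j).symm (by simp [DD, Sym2.eq_iff])
                      (fun h => he1.1 h.symm)
                  have h2 : (((RGraph M N R mem).deleteEdges (DD M N R J)).deleteEdges {e}).Adj
                      .v' (.x j'') :=
                    He_adj (gadj_vx j'') not_DD_vx (fun h => he1.2 h.symm)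
                  exact ⟨.cons h1 (.cons h2 w₂'), by simp only [Walk.length_cons]; omega⟩
          · -- v = y l, b = x j
            subst hv; subst hb
            rcases adj_to_x hGbc.symm with ⟨i, hc, hmem⟩ | hc | ⟨k, hc, hk⟩ | ⟨l'', hc⟩
            · subst hc
              obtain ⟨j', hj'J, hmem'⟩ := hJcov i
              by_cases he1 : e = s(.x j', .z i) ∨ e = s(.x j', .y l)
              · obtain ⟨r, hr⟩ := routeY (J := J) e l
                  (by rcases he1 with h | h <;> subst h <;> intro k1 k2 <;> simp [Sym2.eq_iff])
                  (by rcases he1 with h | h <;> subst h <;> simp [Sym2.eq_iff])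
                refine ⟨r.reverse, ?_⟩
                have hcv : psi M N R (.z i) = N := rfl
                simp only [Walk.length_reverse, hr, Walk.length_cons]
                omega
              · push_neg at he1
                have h1 := (He_adj (mem := mem) (J := J) (e := e) (gadj_xy j' l) (not_DD_xy hj'J)
                  (fun h => he1.2 h.symm)).symm
                have h2 := He_adj (mem := mem) (J := J) (e := e) (gadj_xz j' i hmem') not_DD_xz
                  (fun h => he1.1 h.symm)
                exact ⟨.cons h1 (.cons h2 w₂'), by simp only [Walk.length_cons]; omega⟩
            · subst hc
              obtain ⟨j₀, hj₀J, -⟩ := hJcov ⟨0, hN⟩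
              by_cases he1 : e = s(.v', .x j₀) ∨ e = s(.x j₀, .y l)
              · obtain ⟨r, hr⟩ := routeY (J := J) e l
                  (by rcases he1 with h | h <;> subst h <;> intro k1 k2 <;> simp [Sym2.eq_iff])
                  (by rcases he1 with h | h <;> subst h <;> simp [Sym2.eq_iff])
                refine ⟨r.reverse, ?_⟩
                have hcv : psi M N R (.v' : RV M N R) = N + 1 := rfl
                simp only [Walk.length_reverse, hr, Walk.length_cons]
                omega
              · push_neg at he1
                have h1 := (He_adj (mem := mem) (J := J) (e := e) (gadj_xy j₀ l) (not_DD_xy hj₀J)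
                  (fun h => he1.2 h.symm)).symm
                have h2 := He_adj (mem := mem) (J := J) (e := e) (gadj_vx j₀).symm (by simp [DD, Sym2.eq_iff])
                  (by intro h; apply he1.1; rw [← h, Sym2.eq_swap])
                exact ⟨.cons h1 (.cons h2 w₂'), by simp only [Walk.length_cons]; omega⟩
            · subst hc
              by_cases he1 : e = s(.p k, .y l)
              · obtain ⟨j₀, hj₀J, -⟩ := hJcov ⟨0, hN⟩
                have h1 := (He_adj (mem := mem) (J := J) (e := e) (gadj_xy j₀ l) (not_DD_xy hj₀J)
                  (by subst he1; simp [Sym2.eq_iff])).symm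
                have h2 := (He_adj (mem := mem) (J := J) (e := e) (gadj_px k j₀ hk) not_DD_px
                  (by subst he1; simp [Sym2.eq_iff])).symm
                exact ⟨.cons h1 (.cons h2 w₂'), by simp only [Walk.length_cons]; omega⟩
              · exact ⟨.cons ((He_adj (gadj_py k l hk) not_DD_py
                  (fun h => he1 h.symm)).symm) w₂', by simp only [Walk.length_cons]; omega⟩
            · subst hc
              by_cases hll : l'' = l
              · subst hll; exact ⟨w₂', by simp only [Walk.length_cons]; omega⟩
              · obtain ⟨j₀, hj₀J, -⟩ := hJcov ⟨0, hN⟩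
                by_cases he1 : e = s(.x j₀, .y l) ∨ e = s(.x j₀, .y l'')
                · have h1 : (((RGraph M N R mem).deleteEdges (DD M N R J)).deleteEdges {e}).Adj
                      (.y l) (.p ⟨N+1, by omega⟩) :=
                    (He_adj (gadj_py ⟨N+1, by omega⟩ l rfl) not_DD_py
                      (by rcases he1 with h | h <;> subst h <;> simp [Sym2.eq_iff])).symm
                  have h2 : (((RGraph M N R mem).deleteEdges (DD M N R J)).deleteEdges {e}).Adj
                      (.p ⟨N+1, by omega⟩) (.y l'') :=
                    He_adj (gadj_py ⟨N+1, by omega⟩ l'' rfl) not_DD_py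
                      (by rcases he1 with h | h <;> subst h <;> simp [Sym2.eq_iff])
                  exact ⟨.cons h1 (.cons h2 w₂'), by simp only [Walk.length_cons]; omega⟩
                · push_neg at he1
                  have h1 := (He_adj (mem := mem) (J := J) (e := e) (gadj_xy j₀ l) (not_DD_xy hj₀J)
                    (fun h => he1.1 h.symm)).symm
                  have h2 := He_adj (mem := mem) (J := J) (e := e) (gadj_xy j₀ l'') (not_DD_xy hj₀J)
                    (fun h => he1.2 h.symm)
                  exact ⟨.cons h1 (.cons h2 w₂'), by simp only [Walk.length_cons]; omega⟩

end Surgery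

/-- From a set cover of size `κ` one obtains an edge FT-BFS structure for the
reduction graph `G(U,𝒮)` w.r.t. the source `s = p_0` with exactly `|Ẽ| + κ·R`
edges; in particular `Cost*(s,G) ≤ |Ẽ| + κ·R`. -/
theorem reduction_cover_gives_ftbfs (M N : ℕ) (hM : 1 ≤ M) (hN : 1 ≤ N)
    (mem : Fin M → Fin N → Prop) (hcover : ∀ i : Fin N, ∃ j : Fin M, mem j i)
    (κ : ℕ) (J : Finset (Fin M)) (hJ : J.card = κ)
    (hJcov : ∀ i : Fin N, ∃ j ∈ J, mem j i) :
    (∃ H : SimpleGraph (RV M N ((M * N) ^ 3)),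
        IsFTBFS (RGraph M N ((M * N) ^ 3) mem) H (RV.p 0) ∧
        H.edgeSet.ncard =
          ((RGraph M N ((M * N) ^ 3) mem).edgeSet \ EXY M N ((M * N) ^ 3)).ncard +
            κ * (M * N) ^ 3) ∧
      CostStar (RGraph M N ((M * N) ^ 3) mem) (RV.p 0) ≤
        ((RGraph M N ((M * N) ^ 3) mem).edgeSet \ EXY M N ((M * N) ^ 3)).ncard +
          κ * (M * N) ^ 3 := by
  classical
  set R : ℕ := (M * N) ^ 3 with hR
  set G : SimpleGraph (RV M N R) := RGraph M N R mem with hG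
  set H : SimpleGraph (RV M N R) := G.deleteEdges (DD M N R J) with hH
  have h0 : (RV.p 0 : RV M N R) = RV.p ⟨0, by omega⟩ := by
    congr 1
  have hHle : H ≤ G := deleteEdges_le _
  have key : IsFTBFS G H (RV.p 0) := by
    refine ⟨hHle, ?_⟩
    rw [h0]
    intro e he v
    have hle : H.deleteEdges {e} ≤ G.deleteEdges {e} := by
      intro a b hab
      simp only [deleteEdges_adj, Set.mem_singleton_iff] at hab ⊢
      exact ⟨hHle hab.1, hab.2⟩
    have back : (G.deleteEdges {e}).Reachable (RV.p ⟨0, by omega⟩) v →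
        (H.deleteEdges {e}).Reachable (RV.p ⟨0, by omega⟩) v := by
      intro h
      obtain ⟨w⟩ := h
      obtain ⟨w', -⟩ := surgery hN hJcov e w.reverse.length v w.reverse le_rfl
      exact ⟨w'.reverse⟩
    refine ⟨⟨fun h => h.mono hle, back⟩, ?_⟩
    intro hr
    apply le_antisymm
    · obtain ⟨w, hw⟩ := hr.exists_walk_length_eq_dist
      obtain ⟨w', hw'⟩ := surgery hN hJcov e w.reverse.length v w.reverse le_rfl
      calc (H.deleteEdges {e}).dist (RV.p ⟨0, by omega⟩) v ≤ w'.reverse.length :=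
              dist_le _
        _ = w'.length := Walk.length_reverse _
        _ ≤ w.reverse.length := hw'
        _ = w.length := Walk.length_reverse _
        _ = _ := hw
    · obtain ⟨w, hw⟩ := (back hr).exists_walk_length_eq_dist
      calc (G.deleteEdges {e}).dist (RV.p ⟨0, by omega⟩) v ≤ (w.mapLe hle).length :=
              dist_le _
        _ = w.length := Walk.length_mapLe _ _
        _ = _ := hw
  have hEXYsub : EXY M N R ⊆ G.edgeSet := by
    rintro f ⟨j, l, rfl⟩
    exact gadj_xy j l
  have hDDsub : DD M N R J ⊆ EXY M N R := by
    rintro f ⟨j, l, hj, rfl⟩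
    exact ⟨j, l, rfl⟩
  have hcount : H.edgeSet.ncard = (G.edgeSet \ EXY M N R).ncard + κ * R := by
    have h1 : H.edgeSet = (G.edgeSet \ EXY M N R) ∪ (EXY M N R \ DD M N R J) := by
      rw [hH, edgeSet_deleteEdges]
      ext f
      simp only [Set.mem_diff, Set.mem_union]
      constructor
      · rintro ⟨hf, hnd⟩
        by_cases hx : f ∈ EXY M N R
        · exact Or.inr ⟨hx, hnd⟩
        · exact Or.inl ⟨hf, hx⟩
      · rintro (⟨hf, hx⟩ | ⟨hx, hnd⟩)
        · exact ⟨hf, fun hd => hx (hDDsub hd)⟩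
        · exact ⟨hEXYsub hx, hnd⟩
    have hdisj : Disjoint (G.edgeSet \ EXY M N R) (EXY M N R \ DD M N R J) :=
      Set.disjoint_left.mpr fun a ha hb => ha.2 hb.1
    have hinj : Function.Injective
        (fun jl : Fin M × Fin R => s(RV.x jl.1, (RV.y jl.2 : RV M N R))) := by
      rintro ⟨j, l⟩ ⟨j', l'⟩ h
      simp only [Sym2.eq_iff] at h
      rcases h with ⟨h1, h2⟩ | ⟨h1, h2⟩
      · cases h1; cases h2; rfl
      · cases h1
    have h2 : EXY M N R \ DD M N R J =
        (fun jl : Fin M × Fin R => s(RV.x jl.1, (RV.y jl.2 : RV M N R))) ''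
          ((↑J : Set (Fin M)) ×ˢ (Set.univ : Set (Fin R))) := by
      ext f
      constructor
      · rintro ⟨⟨j, l, rfl⟩, hnd⟩
        have hjJ : j ∈ J := by
          by_contra hc
          exact hnd (mem_DD_xy hc)
        exact ⟨(j, l), ⟨hjJ, trivial⟩, rfl⟩
      · rintro ⟨⟨j, l⟩, ⟨hjJ, -⟩, rfl⟩
        exact ⟨⟨j, l, rfl⟩, not_DD_xy hjJ⟩
    rw [h1, Set.ncard_union_eq hdisj (Set.toFinite _) (Set.toFinite _)]
    congr 1
    rw [h2, Set.ncard_image_of_injective _ hinj]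
    have h3 : ((↑J : Set (Fin M)) ×ˢ (Set.univ : Set (Fin R))) =
        ↑(J ×ˢ (Finset.univ : Finset (Fin R))) := by
      rw [Finset.coe_product, Finset.coe_univ]
    rw [h3, Set.ncard_coe_finset, Finset.card_product, Finset.card_univ,
      Fintype.card_fin, hJ]
  exact ⟨⟨H, key, hcount⟩, Nat.sInf_le ⟨H, key, hcount⟩⟩
end
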